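/- arXiv:2109.02067 — 3 statements merged into one kernel-verified Lean document; each statement's English description precedes it below -/
import Mathlib

section
/- If i : C → D is a G-equivariant Dwyer map of small G-categories and H ⊆ G is a subgroup, then the induced functor on H-fixed subcategories i^H : C^H → D^H is a Dwyer map. -/
open CategoryTheory

universe u

namespace GGlobal

/-- A strict action of a group (or monoid) `G` on a category `C`, given by a monoid
homomorphism into the endomorphism monoid of `C` in `Cat`. -/
abbrev GAct (G : Type u) [Monoid G] (C : Type u) [Category.{u} C] : Type u :=
  G →* CategoryTheory.End (Cat.of C)

variable {G : Type u} [Group G] {C D : Type u} [Category.{u} C] [Category.{u} D]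

/-- A functor is strictly `G`-equivariant. -/
def EquivFun (ρC : GAct G C) (ρD : GAct G D) (F : C ⥤ D) : Prop :=
  ∀ g : G, ((ρC g).toFunctor : C ⥤ C) ⋙ F = F ⋙ ((ρD g).toFunctor : D ⥤ D)

/-- The `H`-fixed points of a `G`-category: objects fixed by all of `H`. -/
structure Fixed (ρ : GAct G C) (H : Subgroup G) : Type u where
  obj : C
  fixed : ∀ h ∈ H, (((ρ h).toFunctor : C ⥤ C)).obj obj = obj

instance {ρ : GAct G C} {H : Subgroup G} : Category.{u} (Fixed ρ H) where
  Hom x y := { φ : x.obj ⟶ y.obj //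
    ∀ h (hh : h ∈ H), ((ρ h).toFunctor : C ⥤ C).map φ =
      eqToHom (x.fixed h hh) ≫ φ ≫ eqToHom (y.fixed h hh).symm }
  id x := ⟨𝟙 x.obj, by
    intro h hh
    have key : ∀ (a b : C) (p : b = a), 𝟙 b = eqToHom p ≫ 𝟙 a ≫ eqToHom p.symm := by
      intros; subst_vars; simp
    exact ((ρ h).toFunctor.map_id x.obj).trans (key _ _ _)⟩
  comp f g := ⟨f.1 ≫ g.1, by
    intro h hh
    have key : ∀ {a b c a' b' c' : C} (p1 : a' = a) (q1 : b = b') (p2 : b' = b) (q2 : c = c')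
        (f : a ⟶ b) (g : b ⟶ c), (eqToHom p1 ≫ f ≫ eqToHom q1) ≫ eqToHom p2 ≫ g ≫ eqToHom q2 =
          eqToHom p1 ≫ (f ≫ g) ≫ eqToHom q2 := by
      intros; subst_vars; simp
    erw [Functor.map_comp, f.2 h hh, g.2 h hh]
    exact key _ _ _ _ _ _⟩
  id_comp f := Subtype.ext (by simp)
  comp_id f := Subtype.ext (by simp)
  assoc f g h := Subtype.ext (by simp)

/-- The functor induced on `H`-fixed points by a strictly equivariant functor. -/
def FixedFunctor (ρC : GAct G C) (ρD : GAct G D) (i : C ⥤ D) (hi : EquivFun ρC ρD i)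
    (H : Subgroup G) : Fixed ρC H ⥤ Fixed ρD H where
  obj x := ⟨i.obj x.obj, fun h hh => by
    have := Functor.congr_obj (hi h) x.obj
    exact this.symm.trans (congrArg i.obj (x.fixed h hh))⟩
  map {x y} φ := ⟨i.map φ.1, fun h hh => by
    have h2 := Functor.congr_hom (hi h).symm φ.1
    have key : ∀ {a b a' b' : C} {A' B' : D} (φ : a ⟶ b) (ψ : a' ⟶ b') (Φ : A' ⟶ B')
        (p : a' = a) (q : b = b') (e1 : A' = i.obj a') (e2 : i.obj b' = B'),
        ψ = eqToHom p ≫ φ ≫ eqToHom q → Φ = eqToHom e1 ≫ i.map ψ ≫ eqToHom e2 →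
        Φ = eqToHom (e1.trans (congrArg i.obj p)) ≫ i.map φ ≫
          eqToHom ((congrArg i.obj q).trans e2) := by
      intros; subst_vars; simp
    exact key φ.1 _ _ _ _ _ _ (φ.2 h hh) h2⟩
  map_id x := Subtype.ext (by exact i.map_id x.obj)
  map_comp f g := Subtype.ext (by exact i.map_comp f.1 g.1)

/-- A functor is a sieve inclusion: fully faithful, injective on objects, and closed
under precomposition: any morphism of `D` with target in the image lies in the image. -/
structure IsSieve (i : C ⥤ D) : Prop where
  full : i.Full
  faithful : i.Faithful
  injObj : Function.Injective i.obj
  closed : ∀ {c : C} {d : D}, (d ⟶ i.obj c) → ∃ c', i.obj c' = d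

/-- A functor is a cosieve inclusion: fully faithful, injective on objects, and closed
under postcomposition: any morphism of `D` with source in the image lies in the image. -/
structure IsCosieve (i : C ⥤ D) : Prop where
  full : i.Full
  faithful : i.Faithful
  injObj : Function.Injective i.obj
  closed : ∀ {c : C} {d : D}, (i.obj c ⟶ d) → ∃ c', i.obj c' = d

/-- A Dwyer map: a sieve admitting a factorization through a cosieve by a functor
admitting a right adjoint. -/
def IsDwyer (i : C ⥤ D) : Prop :=
  IsSieve i ∧ ∃ (X : Cat.{u, u}) (f : C ⥤ X) (j : X ⥤ D),
    i = f ⋙ j ∧ IsCosieve j ∧ ∃ r : X ⥤ C, Nonempty (f ⊣ r)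

/-- A `G`-equivariant Dwyer map: an equivariant sieve admitting an equivariant
factorization through an equivariant cosieve by an equivariant functor admitting a
`G`-equivariant right adjoint (with equivariant unit and counit). -/
def IsGDwyer (ρC : GAct G C) (ρD : GAct G D) (i : C ⥤ D) : Prop :=
  IsSieve i ∧ EquivFun ρC ρD i ∧
    ∃ (X : Cat.{u, u}) (ρX : GAct G X) (f : C ⥤ X) (j : X ⥤ D),
      i = f ⋙ j ∧ EquivFun ρC ρX f ∧ EquivFun ρX ρD j ∧ IsCosieve j ∧
        ∃ (r : X ⥤ C) (adj : f ⊣ r), EquivFun ρX ρC r ∧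
          (∀ (g : G) (c : C),
            HEq (((ρC g).toFunctor : C ⥤ C).map (adj.unit.app c)) (adj.unit.app (((ρC g).toFunctor : C ⥤ C).obj c))) ∧
          (∀ (g : G) (x : X),
            HEq (((ρX g).toFunctor : X ⥤ X).map (adj.counit.app x)) (adj.counit.app (((ρX g).toFunctor : X ⥤ X).obj x)))

end GGlobal

/-! Everything restricts to fixed points. Since `i` and `j` are injective on objects, an object
whose image is `H`-fixed is itself `H`-fixed, so the closure properties of the sieve `i` and of the
cosieve `j` survive. Since they are faithful, a preimage of an `H`-fixed morphism is `H`-fixed, so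
fullness survives. Since the unit and counit of `f ⊣ r` are equivariant, their components at fixed
objects are fixed morphisms, and they form an adjunction `f^H ⊣ r^H`. -/

lemma CategoryTheory.Functor.heq_of_map_heq {C D : Type*} [Category C] [Category D] (F : C ⥤ D)
    [F.Faithful] {a b a' b' : C} (ha : a = a') (hb : b = b') {φ : a ⟶ b} {ψ : a' ⟶ b'}
    (h : F.map φ ≍ F.map ψ) : φ ≍ ψ := by
  subst ha hb
  exact heq_of_eq (F.map_injective (eq_of_heq h))

namespace GGlobal

variable {G : Type u} [Group G] {C D : Type u} [Category.{u} C] [Category.{u} D]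

namespace Fixed

variable {ρ : GAct G C} {H : Subgroup G}

lemma obj_injective : Function.Injective (Fixed.obj : Fixed ρ H → C)
  | ⟨_, _⟩, ⟨_, _⟩, rfl => rfl

@[ext] lemma hom_ext {x y : Fixed ρ H} {φ ψ : x ⟶ y} (h : φ.1 = ψ.1) : φ = ψ :=
  Subtype.ext h

lemma map_heq {x y : Fixed ρ H} (φ : x ⟶ y) {h : G} (hh : h ∈ H) :
    ((ρ h).toFunctor : C ⥤ C).map φ.1 ≍ φ.1 :=
  (conj_eqToHom_iff_heq _ _ _ (y.fixed h hh)).1 (φ.2 h hh)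

/-- The fixedness condition in heterogeneous form, free of the `eqToHom` conjugations. -/
def homMk {x y : Fixed ρ H} (φ : x.obj ⟶ y.obj)
    (hφ : ∀ h ∈ H, ((ρ h).toFunctor : C ⥤ C).map φ ≍ φ) : x ⟶ y :=
  ⟨φ, fun h hh => (conj_eqToHom_iff_heq _ _ _ (y.fixed h hh)).2 (hφ h hh)⟩

end Fixed

section FixedFunctor

variable {ρC : GAct G C} {ρD : GAct G D} {i : C ⥤ D} (hi : EquivFun ρC ρD i) (H : Subgroup G)

lemma fixedFunctor_full [i.Full] [i.Faithful] : (FixedFunctor ρC ρD i hi H).Full where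
  map_surjective {x y} φ := by
    refine ⟨Fixed.homMk (i.preimage φ.1) fun h hh => ?_, Fixed.hom_ext (i.map_preimage φ.1)⟩
    refine i.heq_of_map_heq (x.fixed h hh) (y.fixed h hh) ((Functor.hcongr_hom (hi h) _).trans ?_)
    erw [Functor.comp_map, Functor.map_preimage]
    exact Fixed.map_heq φ hh

lemma fixedFunctor_faithful [i.Faithful] : (FixedFunctor ρC ρD i hi H).Faithful where
  map_injective hφ := Subtype.ext (i.map_injective (congrArg Subtype.val hφ))

lemma fixedFunctor_obj_injective (hinj : Function.Injective i.obj) :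
    Function.Injective (FixedFunctor ρC ρD i hi H).obj :=
  fun _ _ hxy => Fixed.obj_injective (hinj (congrArg Fixed.obj hxy))

lemma exists_fixedFunctor_obj_eq (hinj : Function.Injective i.obj) (d : Fixed ρD H) {c : C}
    (hc : i.obj c = d.obj) : ∃ c' : Fixed ρC H, (FixedFunctor ρC ρD i hi H).obj c' = d := by
  refine ⟨⟨c, fun h hh => hinj ?_⟩, Fixed.obj_injective hc⟩
  refine (Functor.congr_obj (hi h) c).trans ?_
  change ((ρD h).toFunctor : D ⥤ D).obj (i.obj c) = i.obj c
  rw [hc]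
  exact d.fixed h hh

lemma fixedFunctor_isSieve (hs : IsSieve i) : IsSieve (FixedFunctor ρC ρD i hi H) :=
  have := hs.full
  have := hs.faithful
  { full := fixedFunctor_full hi H
    faithful := fixedFunctor_faithful hi H
    injObj := fixedFunctor_obj_injective hi H hs.injObj
    closed := fun {_ d} φ =>
      let ⟨_, hc⟩ := hs.closed φ.1
      exists_fixedFunctor_obj_eq hi H hs.injObj d hc }

lemma fixedFunctor_isCosieve (hs : IsCosieve i) : IsCosieve (FixedFunctor ρC ρD i hi H) :=
  have := hs.full
  have := hs.faithful
  { full := fixedFunctor_full hi H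
    faithful := fixedFunctor_faithful hi H
    injObj := fixedFunctor_obj_injective hi H hs.injObj
    closed := fun {_ d} φ =>
      let ⟨_, hc⟩ := hs.closed φ.1
      exists_fixedFunctor_obj_eq hi H hs.injObj d hc }

end FixedFunctor

def fixedFunctorAdjunction {X : Type u} [Category.{u} X]
    {ρC : GAct G C} {ρX : GAct G X}
    {f : C ⥤ X} {r : X ⥤ C} (adj : f ⊣ r) (hf : EquivFun ρC ρX f) (hr : EquivFun ρX ρC r)
    (hunit : ∀ (g : G) (c : C), ((ρC g).toFunctor : C ⥤ C).map (adj.unit.app c) ≍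
      adj.unit.app (((ρC g).toFunctor : C ⥤ C).obj c))
    (hcounit : ∀ (g : G) (x : X), ((ρX g).toFunctor : X ⥤ X).map (adj.counit.app x) ≍
      adj.counit.app (((ρX g).toFunctor : X ⥤ X).obj x))
    (H : Subgroup G) :
    FixedFunctor ρC ρX f hf H ⊣ FixedFunctor ρX ρC r hr H :=
  { unit :=
    { app := fun c => Fixed.homMk (adj.unit.app c.obj) fun h hh =>
        (hunit h c.obj).trans (congr_arg_heq adj.unit.app (c.fixed h hh))
      naturality := fun _ _ φ => Fixed.hom_ext (adj.unit.naturality φ.1) }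
    counit :=
    { app := fun x => Fixed.homMk (adj.counit.app x.obj) fun h hh =>
        (hcounit h x.obj).trans (congr_arg_heq adj.counit.app (x.fixed h hh))
      naturality := fun _ _ φ => Fixed.hom_ext (adj.counit.naturality φ.1) }
    left_triangle_components := fun c => Fixed.hom_ext (adj.left_triangle_components c.obj)
    right_triangle_components := fun x => Fixed.hom_ext (adj.right_triangle_components x.obj) }

end GGlobal

open GGlobal

/-- If `i : C → D` is a `G`-equivariant Dwyer map of small `G`-categories and `H ⊆ G`
is a subgroup, then the induced functor `i^H : C^H → D^H` on `H`-fixed subcategories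
is a Dwyer map. -/
theorem fixedFunctor_isDwyer
    {G : Type u} [Group G] {C D : Type u} [Category.{u} C] [Category.{u} D]
    (ρC : GAct G C) (ρD : GAct G D) (i : C ⥤ D)
    (hEquiv : EquivFun ρC ρD i) (hDwyer : IsGDwyer ρC ρD i) (H : Subgroup G) :
    IsDwyer (FixedFunctor ρC ρD i hEquiv H) := by
  obtain ⟨hsieve, -, X, ρX, f, j, rfl, hf, hj, hcosieve, r, adj, hr, hunit, hcounit⟩ := hDwyer
  exact ⟨fixedFunctor_isSieve hEquiv H hsieve, Cat.of (Fixed ρX H), FixedFunctor ρC ρX f hf H,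
    FixedFunctor ρX ρD j hj H, rfl, fixedFunctor_isCosieve hj H hcosieve,
    FixedFunctor ρX ρC r hr H, ⟨fixedFunctorAdjunction adj hf hr hunit hcounit H⟩⟩
end

section
/- Let N be a simplicial monoid and X an N-simplicial set. For any subgroup H ⊆ N₀ of the monoid of 0-simplices, the natural map e : X^H → Ex(X^H) ≅ (Ex X)^H agrees with the H-fixed points of the natural transformation e_N : X → Ex_N X, and hence e_N is a levelwise weak equivalence on H-fixed points. -/
open CategoryTheory
open scoped Topology.Homotopy

namespace GGlobal

/-- The map induced on generalized loops by a continuous map. -/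
def genLoopMap {X Y : Type} [TopologicalSpace X] [TopologicalSpace Y] (f : C(X, Y))
    {N : Type} {x : X} (g : Ω^ N X x) : Ω^ N Y (f x) :=
  ⟨f.comp g.1, fun y hy => by
    have := g.2 y hy
    simp only [ContinuousMap.comp_apply, this]⟩

/-- The map induced by a continuous map on homotopy groups. -/
def homotopyGroupMap (N : Type) {X Y : Type} [TopologicalSpace X] [TopologicalSpace Y]
    (f : C(X, Y)) (x : X) : HomotopyGroup N X x → HomotopyGroup N Y (f x) :=
  Quotient.map (genLoopMap f) (fun _ _ h => Nonempty.map (fun F => F.compContinuousMap f) h)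

/-- The map induced by a continuous map on path components. -/
def zerothHomotopyMap {X Y : Type} [TopologicalSpace X] [TopologicalSpace Y]
    (f : C(X, Y)) : ZerothHomotopy X → ZerothHomotopy Y :=
  Quotient.map f (fun _ _ h => Nonempty.map (fun p => p.map f.continuous) h)

/-- A continuous map is a weak homotopy equivalence if it induces a bijection on path
components and on all homotopy groups at all basepoints. -/
def IsWeakHomotopyEquivTop {X Y : Type} [TopologicalSpace X] [TopologicalSpace Y]
    (f : C(X, Y)) : Prop :=
  Function.Bijective (zerothHomotopyMap f) ∧
    ∀ (n : ℕ) (x : X), Function.Bijective (homotopyGroupMap (Fin (n + 1)) f x)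

/-- A map of simplicial sets is a weak homotopy equivalence if its geometric
realization is one. -/
noncomputable def IsWeakHomotopyEquiv {X Y : SSet.{0}} (φ : X ⟶ Y) : Prop :=
  IsWeakHomotopyEquivTop (X := SSet.toTop.obj X) (Y := SSet.toTop.obj Y) (SSet.toTop.map φ).hom

end GGlobal

open CategoryTheory Simplicial

namespace GGlobal

/-- An action of a simplicial monoid `N` (a simplicial object in monoids) on a
simplicial set `X`: levelwise monoid actions compatible with the simplicial
structure maps. -/
structure SAction (N : SimplexCategoryᵒᵖ ⥤ MonCat.{0}) (X : SSet.{0}) where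
  act : ∀ n : SimplexCategoryᵒᵖ, (N.obj n) → X.obj n → X.obj n
  one_act : ∀ n x, act n 1 x = x
  mul_act : ∀ n a b x, act n (a * b) x = act n a (act n b x)
  compat : ∀ {m n : SimplexCategoryᵒᵖ} (φ : m ⟶ n) (a : N.obj m) (x : X.obj m),
    X.map φ (act m a x) = act n (N.map φ a) (X.map φ x)

/-- The unique map from the `0`-th vertex in `SimplexCategoryᵒᵖ`. -/
def toVertex (n : SimplexCategoryᵒᵖ) :
    (Opposite.op (SimplexCategory.mk 0) : SimplexCategoryᵒᵖ) ⟶ n :=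
  (SimplexCategory.const n.unop (SimplexCategory.mk 0) 0).op

variable {N : SimplexCategoryᵒᵖ ⥤ MonCat.{0}} {X : SSet.{0}}

lemma toVertex_comp {m n : SimplexCategoryᵒᵖ} (φ : m ⟶ n) : toVertex m ≫ φ = toVertex n :=
  Quiver.Hom.unop_inj (Subsingleton.elim _ _)

lemma map_toVertex_comp (ρ : SAction N X) {m n : SimplexCategoryᵒᵖ} (φ : m ⟶ n)
    (h : N.obj (Opposite.op (SimplexCategory.mk 0))) :
    N.map φ (N.map (toVertex m) h) = N.map (toVertex n) h := by
  rw [← toVertex_comp φ, N.map_comp]; rfl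

/-- The `H`-fixed points of an `N`-simplicial set, for a submonoid (e.g. a subgroup)
`H` of the monoid of `0`-simplices of `N`, acting on `n`-simplices via the unique map
`[n] → [0]`. -/
def fixedSSet (ρ : SAction N X)
    (H : Submonoid (N.obj (Opposite.op (SimplexCategory.mk 0)))) : SSet.{0} where
  obj n := { x : X.obj n // ∀ h ∈ H, ρ.act n (N.map (toVertex n) h) x = x }
  map {m n} φ := TypeCat.ofHom fun x => ⟨X.map φ x.1, by
    intro h hh
    have h1 := ρ.compat φ (N.map (toVertex m) h) x.1
    rw [map_toVertex_comp ρ φ h] at h1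
    rw [← h1, x.2 h hh]⟩
  map_id n := by
    ext x
    simp
  map_comp φ ψ := by
    ext x
    simp

/-- The inclusion of the fixed points. -/
def fixedIncl (ρ : SAction N X)
    (H : Submonoid (N.obj (Opposite.op (SimplexCategory.mk 0)))) : fixedSSet ρ H ⟶ X where
  app _ := TypeCat.ofHom fun x => x.1
  naturality _ _ _ := rfl

/-- The simplicial endomorphism of `X` given by the action of a `0`-simplex `h`. -/
def actMap (ρ : SAction N X) (h : N.obj (Opposite.op (SimplexCategory.mk 0))) : X ⟶ X where
  app n := TypeCat.ofHom fun x => ρ.act n (N.map (toVertex n) h) x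
  naturality m n φ := by
    ext x
    have h1 := ρ.compat φ (N.map (toVertex m) h) x
    rw [map_toVertex_comp ρ φ h] at h1
    exact h1.symm

/-- The restriction to fixed points of the natural transformation `e : id ⇒ Ex`,
given an `N`-action on `Ex X` such that each `h ∈ N₀` acts by `Ex` of its action on
`X` (this is the action of `Ex_N X`). -/
def eFix (Ex : SSet.{0} ⥤ SSet.{0}) (e : 𝟭 SSet.{0} ⟶ Ex)
    (ρ : SAction N X) (ρ' : SAction N (Ex.obj X))
    (hρ' : ∀ (h : N.obj (Opposite.op (SimplexCategory.mk 0))) (n : SimplexCategoryᵒᵖ)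
      (y : (Ex.obj X).obj n),
      ρ'.act n (N.map (toVertex n) h) y = (Ex.map (actMap ρ h)).app n y)
    (H : Submonoid (N.obj (Opposite.op (SimplexCategory.mk 0)))) :
    fixedSSet ρ H ⟶ fixedSSet ρ' H where
  app n := TypeCat.ofHom fun x => ⟨(e.app X).app n x.1, by
    intro h hh
    rw [hρ' h n ((e.app X).app n x.1)]
    have h4 : (Ex.map (actMap ρ h)).app n ((e.app X).app n x.1) =
        (e.app X).app n ((actMap ρ h).app n x.1) := by
      have h5 := ConcreteCategory.congr_hom (congr_app (e.naturality (actMap ρ h)) n) x.1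
      simpa using h5.symm
    exact h4.trans (congrArg _ (x.2 h hh))⟩
  naturality m n φ := by
    ext x
    have h6 := ConcreteCategory.congr_hom ((e.app X).naturality φ) x.1
    apply Subtype.ext
    first
      | (exact h6)
      | (exact h6.symm)
      | (simp)

end GGlobal

open GGlobal

/-!
By naturality of `e`, the map `eFix` followed by the inclusion `(Ex X)^H → Ex X` is `e` on `X^H`
followed by `Ex` of the inclusion `X^H → X`. The fixed points `X^H` are the limit of the action
diagram `H ⥤ SSet`; since `Ex` preserves this limit and `Ex_N` acts on `Ex X` through `Ex`, the
comparison map is an isomorphism `Ex(X^H) ≅ (Ex X)^H` over `Ex X`. Hence `eFix` is `e` on `X^H`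
followed by an isomorphism, and is a weak equivalence by Kan's lemma.
-/

namespace GGlobal

section WeakHomotopyEquiv

variable {X Y Z : Type} [TopologicalSpace X] [TopologicalSpace Y] [TopologicalSpace Z]

lemma zerothHomotopyMap_id : zerothHomotopyMap (ContinuousMap.id X) = id := by
  funext q
  induction q using Quotient.inductionOn
  rfl

lemma zerothHomotopyMap_comp (f : C(X, Y)) (g : C(Y, Z)) :
    zerothHomotopyMap (g.comp f) = zerothHomotopyMap g ∘ zerothHomotopyMap f := by
  funext q
  induction q using Quotient.inductionOn
  rfl

lemma homotopyGroupMap_id (N : Type) (x : X) :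
    homotopyGroupMap N (ContinuousMap.id X) x = id := by
  funext q
  induction q using Quotient.inductionOn
  rfl

lemma homotopyGroupMap_comp (N : Type) (f : C(X, Y)) (g : C(Y, Z)) (x : X) :
    homotopyGroupMap N (g.comp f) x = homotopyGroupMap N g (f x) ∘ homotopyGroupMap N f x := by
  funext q
  induction q using Quotient.inductionOn
  rfl

/-- Phrased with an equation `k = id` so that it applies to `g'.comp g`, whose value at `x` is
only propositionally equal to `x`: the homotopy groups at the two basepoints are different types. -/
lemma homotopyGroupMap_bijective_of_eq_id (N : Type) {k : C(X, X)}
    (hk : k = ContinuousMap.id X) (x : X) : Function.Bijective (homotopyGroupMap N k x) := by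
  subst hk
  rw [homotopyGroupMap_id]
  exact Function.bijective_id

lemma IsWeakHomotopyEquivTop.comp {f : C(X, Y)} {g : C(Y, Z)}
    (hf : IsWeakHomotopyEquivTop f) (hg : IsWeakHomotopyEquivTop g) :
    IsWeakHomotopyEquivTop (g.comp f) := by
  refine ⟨?_, fun n x => ?_⟩
  · rw [zerothHomotopyMap_comp]
    exact hg.1.comp hf.1
  · rw [homotopyGroupMap_comp]
    exact (hg.2 n (f x)).comp (hf.2 n x)

lemma IsWeakHomotopyEquivTop.of_inverse {g : C(X, Y)} {g' : C(Y, X)}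
    (hg'g : g'.comp g = ContinuousMap.id X) (hgg' : g.comp g' = ContinuousMap.id Y) :
    IsWeakHomotopyEquivTop g := by
  refine ⟨?_, fun n x => ?_⟩
  · have hleft := zerothHomotopyMap_comp g g'
    have hright := zerothHomotopyMap_comp g' g
    rw [hg'g, zerothHomotopyMap_id] at hleft
    rw [hgg', zerothHomotopyMap_id] at hright
    exact Function.bijective_iff_has_inverse.2
      ⟨zerothHomotopyMap g', fun a => (congrFun hleft a).symm, fun a => (congrFun hright a).symm⟩
  · have hg'g_bij := homotopyGroupMap_bijective_of_eq_id (Fin (n + 1)) hg'g x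
    have hgg'_bij := homotopyGroupMap_bijective_of_eq_id (Fin (n + 1)) hgg' (g x)
    rw [homotopyGroupMap_comp] at hg'g_bij hgg'_bij
    have hg'_bij : Function.Bijective (homotopyGroupMap (Fin (n + 1)) g' (g x)) :=
      ⟨hgg'_bij.1.of_comp, hg'g_bij.2.of_comp⟩
    exact (hg'_bij.of_comp_iff' _).1 hg'g_bij

lemma IsWeakHomotopyEquiv.comp {A B C : SSet.{0}} {φ : A ⟶ B} {ψ : B ⟶ C}
    (hφ : IsWeakHomotopyEquiv φ) (hψ : IsWeakHomotopyEquiv ψ) : IsWeakHomotopyEquiv (φ ≫ ψ) := by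
  unfold IsWeakHomotopyEquiv
  rw [Functor.map_comp, TopCat.hom_comp]
  exact IsWeakHomotopyEquivTop.comp hφ hψ

lemma isWeakHomotopyEquiv_of_isIso {A B : SSet.{0}} (φ : A ⟶ B) [IsIso φ] :
    IsWeakHomotopyEquiv φ :=
  IsWeakHomotopyEquivTop.of_inverse (g' := (inv (SSet.toTop.map φ)).hom)
    (congrArg TopCat.Hom.hom (IsIso.hom_inv_id (SSet.toTop.map φ)))
    (congrArg TopCat.Hom.hom (IsIso.inv_hom_id (SSet.toTop.map φ)))

end WeakHomotopyEquiv

section FixedPoints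

variable {N : SimplexCategoryᵒᵖ ⥤ MonCat.{0}} {X : SSet.{0}} (ρ : SAction N X)
  (H : Submonoid (N.obj (Opposite.op (SimplexCategory.mk 0))))

lemma actMap_one : actMap ρ 1 = 𝟙 X := by
  ext n x
  change ρ.act n (N.map (toVertex n) 1) x = x
  rw [map_one, ρ.one_act]

lemma actMap_mul (a b : N.obj (Opposite.op (SimplexCategory.mk 0))) :
    actMap ρ (a * b) = actMap ρ b ≫ actMap ρ a := by
  ext n x
  change ρ.act n (N.map (toVertex n) (a * b)) x = _
  rw [map_mul, ρ.mul_act]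
  rfl

def actFunctor : SingleObj H ⥤ SSet.{0} where
  obj _ := X
  map h := actMap ρ (show H from h)
  map_id _ := actMap_one ρ
  map_comp f g := actMap_mul ρ (show H from g) (show H from f)

lemma fixedIncl_comp_actMap {h : N.obj (Opposite.op (SimplexCategory.mk 0))} (hh : h ∈ H) :
    fixedIncl ρ H ≫ actMap ρ h = fixedIncl ρ H := by
  ext n x
  exact x.2 h hh

instance : Mono (fixedIncl ρ H) := by
  have (n : SimplexCategoryᵒᵖ) : Mono ((fixedIncl ρ H).app n) :=
    (mono_iff_injective _).2 Subtype.val_injective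
  exact NatTrans.mono_of_mono_app _

def fixedCone : Limits.Cone (actFunctor ρ H) where
  pt := fixedSSet ρ H
  π.app _ := fixedIncl ρ H
  π.naturality _ _ h :=
    (Category.id_comp _).trans (fixedIncl_comp_actMap ρ H (show H from h).2).symm

def fixedConeIsLimit : Limits.IsLimit (fixedCone ρ H) where
  lift s :=
    { app n := TypeCat.ofHom fun z => ⟨(s.π.app (SingleObj.star H)).app n z, fun h hh =>
        ConcreteCategory.congr_hom (congr_app (s.w (show SingleObj.star H ⟶ _ from ⟨h, hh⟩)) n) z⟩
      naturality m n φ := by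
        ext z
        apply Subtype.ext
        exact ConcreteCategory.congr_hom ((s.π.app (SingleObj.star H)).naturality φ) z }
  uniq s m w := (cancel_mono (fixedIncl ρ H)).1 (w (SingleObj.star H))

end FixedPoints

section ExFixedPoints

variable {Ex : SSet.{0} ⥤ SSet.{0}} {N : SimplexCategoryᵒᵖ ⥤ MonCat.{0}} {X : SSet.{0}}
  (ρ : SAction N X) (ρ' : SAction N (Ex.obj X))
  (hρ' : ∀ (h : N.obj (Opposite.op (SimplexCategory.mk 0))) (n : SimplexCategoryᵒᵖ)
    (y : (Ex.obj X).obj n), ρ'.act n (N.map (toVertex n) h) y = (Ex.map (actMap ρ h)).app n y)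
  (H : Submonoid (N.obj (Opposite.op (SimplexCategory.mk 0))))

def actFunctorCompIso : actFunctor ρ H ⋙ Ex ≅ actFunctor ρ' H :=
  NatIso.ofComponents (fun _ => Iso.refl _) fun h => by
    ext n y
    exact (hρ' (show H from h) n y).symm

noncomputable def exFixedIso [Limits.PreservesLimits Ex] :
    Ex.obj (fixedSSet ρ H) ≅ fixedSSet ρ' H :=
  ((Limits.IsLimit.postcomposeHomEquiv (actFunctorCompIso ρ ρ' hρ' H) _).symm
    (Limits.isLimitOfPreserves Ex (fixedConeIsLimit ρ H))).conePointUniqueUpToIso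
    (fixedConeIsLimit ρ' H)

lemma exFixedIso_hom_comp_fixedIncl [Limits.PreservesLimits Ex] :
    (exFixedIso ρ ρ' hρ' H).hom ≫ fixedIncl ρ' H = Ex.map (fixedIncl ρ H) :=
  (Limits.IsLimit.conePointUniqueUpToIso_hom_comp _ _ (SingleObj.star H)).trans
    (Category.comp_id _)

variable (e : 𝟭 SSet.{0} ⟶ Ex)

lemma eFix_comp_fixedIncl :
    eFix Ex e ρ ρ' hρ' H ≫ fixedIncl ρ' H = e.app (fixedSSet ρ H) ≫ Ex.map (fixedIncl ρ H) := by
  rw [← e.naturality (fixedIncl ρ H)]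
  rfl

lemma eFix_eq_app_comp_exFixedIso_hom [Limits.PreservesLimits Ex] :
    eFix Ex e ρ ρ' hρ' H = e.app (fixedSSet ρ H) ≫ (exFixedIso ρ ρ' hρ' H).hom := by
  rw [← cancel_mono (fixedIncl ρ' H), Category.assoc, exFixedIso_hom_comp_fixedIncl,
    eFix_comp_fixedIncl]

end ExFixedPoints

end GGlobal

theorem eFix_agrees_and_isWeakHomotopyEquiv_general
    (Ex : SSet.{0} ⥤ SSet.{0}) [Limits.PreservesLimits Ex]
    (e : 𝟭 SSet.{0} ⟶ Ex)
    (hKan : ∀ Y : SSet.{0}, IsWeakHomotopyEquiv (e.app Y))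
    (N : SimplexCategoryᵒᵖ ⥤ MonCat.{0}) (X : SSet.{0})
    (ρ : SAction N X) (ρ' : SAction N (Ex.obj X))
    (hρ' : ∀ (h : N.obj (Opposite.op (SimplexCategory.mk 0))) (n : SimplexCategoryᵒᵖ)
      (y : (Ex.obj X).obj n),
      ρ'.act n (N.map (toVertex n) h) y = (Ex.map (actMap ρ h)).app n y)
    (H : Submonoid (N.obj (Opposite.op (SimplexCategory.mk 0)))) :
    (e.app (fixedSSet ρ H) ≫ Ex.map (fixedIncl ρ H) =
        eFix Ex e ρ ρ' hρ' H ≫ fixedIncl ρ' H) ∧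
      IsWeakHomotopyEquiv (eFix Ex e ρ ρ' hρ' H) := by
  refine ⟨(eFix_comp_fixedIncl ρ ρ' hρ' H e).symm, ?_⟩
  rw [eFix_eq_app_comp_exFixedIso_hom]
  exact (hKan _).comp (isWeakHomotopyEquiv_of_isIso _)

/-- Let `N` be a simplicial monoid and `X` an `N`-simplicial set, and let `Ex` be a
limit-preserving endofunctor of simplicial sets equipped with a natural transformation
`e : id ⇒ Ex` which is a weak homotopy equivalence on every simplicial set (Kan's
lemma). For any subgroup `H` of the monoid `N₀` of `0`-simplices, the natural map
`e : X^H → Ex(X^H) ≅ (Ex X)^H` agrees with the `H`-fixed points of `e_N : X → Ex_N X`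
(under the canonical comparison map `Ex(X^H) → Ex X`), and hence `e_N` is a levelwise
weak equivalence on `H`-fixed points. -/
theorem eFix_agrees_and_isWeakHomotopyEquiv
    (Ex : SSet.{0} ⥤ SSet.{0}) [Limits.PreservesLimits Ex]
    (e : 𝟭 SSet.{0} ⟶ Ex)
    (hKan : ∀ Y : SSet.{0}, IsWeakHomotopyEquiv (e.app Y))
    (N : SimplexCategoryᵒᵖ ⥤ MonCat.{0}) (X : SSet.{0})
    (ρ : SAction N X) (ρ' : SAction N (Ex.obj X))
    (hρ' : ∀ (h : N.obj (Opposite.op (SimplexCategory.mk 0))) (n : SimplexCategoryᵒᵖ)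
      (y : (Ex.obj X).obj n),
      ρ'.act n (N.map (toVertex n) h) y = (Ex.map (actMap ρ h)).app n y)
    (H : Submonoid (N.obj (Opposite.op (SimplexCategory.mk 0))))
    (hH : ∀ h ∈ H, ∃ h' ∈ H, h * h' = 1 ∧ h' * h = 1) :
    (e.app (fixedSSet ρ H) ≫ Ex.map (fixedIncl ρ H) =
        eFix Ex e ρ ρ' hρ' H ≫ fixedIncl ρ' H) ∧
      IsWeakHomotopyEquiv (eFix Ex e ρ ρ' hρ' H) :=
  eFix_agrees_and_isWeakHomotopyEquiv_general Ex e hKan N X ρ ρ' hρ' H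
end

section
/- A tame action of the monoid M of injections ω → ω on a set is uniquely determined by the restricted action of the group of bijections of ω: the forgetful functor from tame M-sets to tame core(M)-sets (nominal sets) is an equivalence of categories. -/
open CategoryTheory

/-- The monoid `M` of all injections `ω → ω` under composition. -/
def InjMonoid : Type := { f : ℕ → ℕ // Function.Injective f }

instance : Monoid InjMonoid where
  one := ⟨id, fun _ _ h => h⟩
  mul u v := ⟨u.1 ∘ v.1, u.2.comp v.2⟩
  one_mul u := Subtype.ext rfl
  mul_one u := Subtype.ext rfl
  mul_assoc u v w := Subtype.ext rfl

/-- A tame `M`-set: a set with an action of the monoid `M` of injections `ω → ω`,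
such that every element has a finite support: the action of `u ∈ M` on it depends
only on the values of `u` on the support. -/
structure TameMSet : Type 1 where
  carrier : Type
  act : InjMonoid → carrier → carrier
  one_act : ∀ x, act 1 x = x
  mul_act : ∀ u v x, act (u * v) x = act u (act v x)
  tame : ∀ x : carrier, ∃ S : Finset ℕ,
    ∀ u v : InjMonoid, (∀ s ∈ S, u.1 s = v.1 s) → act u x = act v x

instance : Category.{0} TameMSet where
  Hom X Y := { f : X.carrier → Y.carrier // ∀ u x, f (X.act u x) = Y.act u (f x) }
  id X := ⟨id, fun _ _ => rfl⟩
  comp f g := ⟨g.1 ∘ f.1, fun u x => by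
    show g.1 (f.1 _) = _
    rw [f.2, g.2]
    rfl⟩
  id_comp f := Subtype.ext rfl
  comp_id f := Subtype.ext rfl
  assoc f g h := Subtype.ext rfl

/-- A nominal set: a set with an action of the group `core(M)` of bijections of `ω`,
such that every element has a finite support. -/
structure NominalSet : Type 1 where
  carrier : Type
  act : Equiv.Perm ℕ → carrier → carrier
  one_act : ∀ x, act 1 x = x
  mul_act : ∀ u v x, act (u * v) x = act u (act v x)
  tame : ∀ x : carrier, ∃ S : Finset ℕ,
    ∀ u v : Equiv.Perm ℕ, (∀ s ∈ S, u s = v s) → act u x = act v x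

instance : Category.{0} NominalSet where
  Hom X Y := { f : X.carrier → Y.carrier // ∀ u x, f (X.act u x) = Y.act u (f x) }
  id X := ⟨id, fun _ _ => rfl⟩
  comp f g := ⟨g.1 ∘ f.1, fun u x => by
    show g.1 (f.1 _) = _
    rw [f.2, g.2]
    rfl⟩
  id_comp f := Subtype.ext rfl
  comp_id f := Subtype.ext rfl
  assoc f g h := Subtype.ext rfl

/-- The inclusion of the group of bijections of `ω` into the monoid of injections. -/
def permToInj (σ : Equiv.Perm ℕ) : InjMonoid := ⟨σ, σ.injective⟩

lemma permToInj_one : permToInj 1 = 1 := Subtype.ext (funext fun _ => rfl)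

lemma permToInj_mul (u v : Equiv.Perm ℕ) :
    permToInj (u * v) = permToInj u * permToInj v := Subtype.ext (funext fun _ => rfl)

/-- The forgetful functor from tame `M`-sets to nominal sets, restricting the action
along the inclusion `core(M) → M` of the group of bijections of `ω`. -/
def forgetTame : TameMSet ⥤ NominalSet where
  obj X :=
    { carrier := X.carrier
      act := fun σ x => X.act (permToInj σ) x
      one_act := fun x => by
        show X.act (permToInj 1) x = x
        rw [permToInj_one, X.one_act]
      mul_act := fun u v x => by
        show X.act (permToInj (u * v)) x = X.act (permToInj u) (X.act (permToInj v) x)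
        rw [permToInj_mul, X.mul_act]
      tame := fun x => by
        obtain ⟨S, hS⟩ := X.tame x
        exact ⟨S, fun u v huv => hS _ _ huv⟩ }
  map f := ⟨f.1, fun σ x => f.2 _ x⟩
  map_id X := Subtype.ext rfl
  map_comp f g := Subtype.ext rfl

/-! Every injection `u` of `ω` agrees on any given finite set with some bijection. Hence on an
element `x` with finite support `S`, a tame `M`-action must let `u` act as any bijection agreeing
with `u` on `S`. This forces morphisms of nominal sets to commute with the `M`-action (fullness),
and conversely it defines an `M`-action extending any nominal action (essential surjectivity):
the result does not depend on the bijection, nor on the support, since two supports can be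
merged into their union. -/

theorem Equiv.Perm.exists_eqOn_finset {α : Type*} (S : Finset α) (u : α → α)
    (hu : Set.InjOn u S) : ∃ σ : Equiv.Perm α, ∀ s ∈ S, σ s = u s := by
  obtain ⟨σ, hσ⟩ := Equiv.Perm.exists_extending_pair (α := S) Subtype.val (fun s => u s)
    Subtype.val_injective (fun s t h => Subtype.ext (hu s.2 t.2 h))
  exact ⟨σ, fun s hs => hσ ⟨s, hs⟩⟩

lemma InjMonoid.exists_perm_eqOn (u : InjMonoid) (S : Finset ℕ) :
    ∃ σ : Equiv.Perm ℕ, ∀ s ∈ S, σ s = u.1 s :=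
  Equiv.Perm.exists_eqOn_finset S u.1 u.2.injOn

instance : forgetTame.Faithful where
  map_injective h := Subtype.ext (congrArg Subtype.val h :)

instance : forgetTame.Full where
  map_surjective {X Y} f := by
    refine ⟨⟨f.1, fun u x => ?_⟩, rfl⟩
    obtain ⟨S, hS⟩ := X.tame x
    obtain ⟨T, hT⟩ := Y.tame (f.1 x)
    obtain ⟨σ, hσ⟩ := u.exists_perm_eqOn (S ∪ T)
    have hX : X.act u x = X.act (permToInj σ) x :=
      hS _ _ fun s hs => (hσ s (Finset.mem_union_left T hs)).symm
    have hY : Y.act (permToInj σ) (f.1 x) = Y.act u (f.1 x) :=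
      hT _ _ fun s hs => hσ s (Finset.mem_union_right S hs)
    exact (congrArg f.1 hX).trans ((f.2 σ x).trans hY)

namespace NominalSet

def Supports (X : NominalSet) (S : Finset ℕ) (x : X.carrier) : Prop :=
  ∀ σ τ : Equiv.Perm ℕ, (∀ s ∈ S, σ s = τ s) → X.act σ x = X.act τ x

lemma Supports.act {X : NominalSet} {S : Finset ℕ} {x : X.carrier} (hx : X.Supports S x)
    (π : Equiv.Perm ℕ) : X.Supports (S.image π) (X.act π x) := by
  intro σ τ h
  rw [← X.mul_act, ← X.mul_act]
  exact hx _ _ fun s hs => h (π s) (Finset.mem_image_of_mem π hs)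

variable (X : NominalSet)

lemma exists_supports (x : X.carrier) : ∃ S, X.Supports S x := X.tame x

noncomputable def extendAct (u : InjMonoid) (x : X.carrier) : X.carrier :=
  X.act (u.exists_perm_eqOn (X.tame x).choose).choose x

lemma extendAct_eq {u : InjMonoid} {x : X.carrier} {S : Finset ℕ} (hx : X.Supports S x)
    {σ : Equiv.Perm ℕ} (hσ : ∀ s ∈ S, σ s = u.1 s) : X.extendAct u x = X.act σ x := by
  obtain ⟨τ, hτ⟩ := u.exists_perm_eqOn ((X.tame x).choose ∪ S)
  have hσ₀ := (u.exists_perm_eqOn (X.tame x).choose).choose_spec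
  calc X.extendAct u x
      = X.act τ x := (X.tame x).choose_spec _ _ fun s hs => by
        rw [hσ₀ s hs, hτ s (Finset.mem_union_left _ hs)]
    _ = X.act σ x := hx _ _ fun s hs => by
        rw [hσ s hs, hτ s (Finset.mem_union_right _ hs)]

lemma extendAct_permToInj (σ : Equiv.Perm ℕ) (x : X.carrier) :
    X.extendAct (permToInj σ) x = X.act σ x :=
  X.extendAct_eq (X.tame x).choose_spec fun _ _ => rfl

lemma extendAct_mul (u v : InjMonoid) (x : X.carrier) :
    X.extendAct (u * v) x = X.extendAct u (X.extendAct v x) := by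
  obtain ⟨S, hS⟩ := X.exists_supports x
  obtain ⟨σv, hσv⟩ := v.exists_perm_eqOn S
  obtain ⟨σu, hσu⟩ := u.exists_perm_eqOn (S.image σv)
  have hvx : X.extendAct v x = X.act σv x := X.extendAct_eq hS hσv
  have huv : ∀ s ∈ S, (σu * σv) s = (u * v).1 s := fun s hs => by
    change σu (σv s) = u.1 (v.1 s)
    rw [hσu _ (Finset.mem_image_of_mem σv hs), hσv s hs]
  rw [hvx, X.extendAct_eq hS huv, X.extendAct_eq (hS.act σv) hσu, X.mul_act]

noncomputable def toTameMSet : TameMSet where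
  carrier := X.carrier
  act := X.extendAct
  one_act x := by rw [← permToInj_one, extendAct_permToInj, X.one_act]
  mul_act := X.extendAct_mul
  tame x := by
    obtain ⟨S, hS⟩ := X.exists_supports x
    refine ⟨S, fun u v huv => ?_⟩
    obtain ⟨σ, hσ⟩ := u.exists_perm_eqOn S
    rw [X.extendAct_eq hS hσ, X.extendAct_eq hS fun s hs => (hσ s hs).trans (huv s hs)]

def forgetTameMSetIso : forgetTame.obj X.toTameMSet ≅ X where
  hom := ⟨id, X.extendAct_permToInj⟩
  inv := ⟨id, fun σ x => (X.extendAct_permToInj σ x).symm⟩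
  hom_inv_id := rfl
  inv_hom_id := rfl

end NominalSet

instance : forgetTame.EssSurj where
  mem_essImage X := ⟨X.toTameMSet, ⟨X.forgetTameMSetIso⟩⟩

/-- A tame action of the monoid `M` of injections `ω → ω` is uniquely determined by
the restricted action of the group of bijections of `ω`: the forgetful functor from
tame `M`-sets to nominal sets is an equivalence of categories. -/
theorem forgetTame_isEquivalence : forgetTame.IsEquivalence := {}
end
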